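/- Let V be a vector space over ℚ, let g and s be ℚ-linear endomorphisms of V with g ∘ s = s ∘ g, g ∘ g = id and s^{2n} = id for a fixed integer n ≥ 1, let φ : V → ℚ be ℚ-linear, and let q ∈ ℚ with q ≥ 1. Let λ₁ ∈ V, let v₁, …, v_N ∈ V satisfy g(s^{2n−1}(v_j)) = −v_j for all j, let m₁, …, m_N be natural numbers, and set λ = q·s^{2n−1}(λ₁) − g(λ₁) + ∑_{j=1}^{N} m_j · g(v_j). If φ(g(λ₁)) ≤ 0 and φ(g(λ₁)) ≤ ∑_{j=1}^{N} m_j · φ(g(v_j)), then ∑_{i=0}^{2n−1} qⁱ · φ( gⁱ( s^{2n−i}(λ) ) ) ≤ 0. -/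

import Mathlib

/-!
Put `u = g ∘ s⁻¹` with `s⁻¹ = s^{2n−1}`. Then `gⁱ ∘ s^{2n−i} = uⁱ`, `u^{2n} = 1`,
`u (g v_j) = −g v_j`, and `λ = q • u(gλ₁) − gλ₁ + w` with `w = ∑ m_j g(v_j)`. The weighted sum
`∑ qⁱ φ(uⁱ λ)` therefore telescopes in the `λ₁`-part and is a geometric series in the `w`-part:
it equals `(q^{2n} − 1) P + (∑ (−q)ⁱ) S` with `P = φ(gλ₁)`, `S = φ(w)`. Multiplying by `q + 1 > 0`
gives `(q^{2n} − 1)((P − S) + qP)`, which is `≤ 0` because `P ≤ S`, `P ≤ 0` and `q ≥ 1`.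
-/

open Finset

theorem pow_sub_eq_pow_pred_pow {M : Type*} [Monoid M] {s : M} {N i : ℕ}
    (hs : s ^ N = 1) (hi : i ≤ N) : s ^ (N - i) = (s ^ (N - 1)) ^ i := by
  rcases i.eq_zero_or_pos with rfl | hi0
  · simp [hs]
  have hst : s * s ^ (N - 1) = 1 := by rw [← pow_succ', Nat.sub_add_cancel (by omega), hs]
  calc s ^ (N - i) = s ^ (N - i) * (s * s ^ (N - 1)) ^ i := by rw [hst, one_pow, mul_one]
    _ = s ^ (N - i) * s ^ i * (s ^ (N - 1)) ^ i := by
      rw [(Commute.self_pow s _).mul_pow, mul_assoc]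
    _ = (s ^ (N - 1)) ^ i := by rw [← pow_add, Nat.sub_add_cancel hi, hs, one_mul]

section Endomorphism

variable {R V : Type*} [CommRing R] [AddCommGroup V] [Module R V]

theorem Module.End.pow_apply_of_apply_eq_neg {u : Module.End R V} {w : V} (hw : u w = -w)
    (i : ℕ) : (u ^ i) w = (-1 : R) ^ i • w := by
  induction i with
  | zero => simp
  | succ i ih => rw [pow_succ, Module.End.mul_apply, hw, map_neg, ih, pow_succ, mul_smul]; simp

theorem sum_range_pow_mul_apply_pow_apply (φ : V →ₗ[R] R) {u : Module.End R V} {k : ℕ}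
    (hk : u ^ k = 1) (q : R) (a : V) {w : V} (hw : u w = -w) :
    ∑ i ∈ range k, q ^ i * φ ((u ^ i) (q • u a - a + w))
      = (q ^ k - 1) * φ a + (∑ i ∈ range k, (-q) ^ i) * φ w := by
  have hterm : ∀ i, q ^ i * φ ((u ^ i) (q • u a - a + w))
      = (q ^ (i + 1) * φ ((u ^ (i + 1)) a) - q ^ i * φ ((u ^ i) a)) + (-q) ^ i * φ w := by
    intro i
    rw [map_add, map_sub, map_smul, ← Module.End.mul_apply, ← pow_succ,
      Module.End.pow_apply_of_apply_eq_neg hw, neg_pow q]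
    simp only [map_add, map_sub, map_smul, smul_eq_mul]
    ring
  simp_rw [hterm, sum_add_distrib, sum_range_sub (fun i => q ^ i * φ ((u ^ i) a)), hk, sum_mul]
  simp only [pow_zero, one_mul, Module.End.one_apply]
  ring

end Endomorphism

theorem pow_sub_one_mul_add_geom_sum_neg_mul_nonpos {K : Type*} [Field K] [LinearOrder K]
    [IsStrictOrderedRing K] {q P S : K} (n : ℕ) (hq : 1 ≤ q) (hP : P ≤ 0) (hPS : P ≤ S) :
    (q ^ (2 * n) - 1) * P + (∑ i ∈ range (2 * n), (-q) ^ i) * S ≤ 0 := by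
  have hgeom : (∑ i ∈ range (2 * n), (-q) ^ i) * (q + 1) = 1 - q ^ (2 * n) := by
    have h := geom_sum_mul (-q) (2 * n)
    rw [Even.neg_pow ⟨n, two_mul n⟩] at h
    linear_combination -h
  have hfactor : ((q ^ (2 * n) - 1) * P + (∑ i ∈ range (2 * n), (-q) ^ i) * S) * (q + 1)
      = (q ^ (2 * n) - 1) * ((P - S) + q * P) := by
    linear_combination S * hgeom
  refine nonpos_of_mul_nonpos_left ?_ (by linarith : (0 : K) < q + 1)
  rw [hfactor]
  refine mul_nonpos_of_nonneg_of_nonpos (by linarith [one_le_pow₀ (n := 2 * n) hq]) ?_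
  nlinarith

theorem stmt8_general (V : Type*) [AddCommGroup V] [Module ℚ V]
    (g s : Module.End ℚ V) (hcomm : g * s = s * g) (hg : g * g = 1)
    (n : ℕ) (hs : s ^ (2 * n) = 1)
    (φ : V →ₗ[ℚ] ℚ) (q : ℚ) (hq : 1 ≤ q)
    (lam₁ : V) (N : ℕ) (v : Fin N → V)
    (hv : ∀ j, g ((s ^ (2 * n - 1)) (v j)) = -(v j))
    (m : Fin N → ℕ)
    (lam : V)
    (hlam : lam = q • (s ^ (2 * n - 1)) lam₁ - g lam₁ + ∑ j, (m j : ℚ) • g (v j))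
    (h1 : φ (g lam₁) ≤ 0)
    (h2 : φ (g lam₁) ≤ ∑ j, (m j : ℚ) * φ (g (v j))) :
    ∑ i ∈ Finset.range (2 * n), q ^ i * φ ((g ^ i) ((s ^ (2 * n - i)) lam)) ≤ 0 := by
  set t := s ^ (2 * n - 1)
  set u := g * t
  have hgt : Commute g t := Commute.pow_right hcomm _
  have hgg : ∀ x, g (g x) = x := fun x => by rw [← Module.End.mul_apply, hg, Module.End.one_apply]
  have hug : ∀ x, u (g x) = t x := fun x => by
    rw [← Module.End.mul_apply, mul_assoc, ← hgt.eq, ← mul_assoc, hg, one_mul]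
  have hu : u ^ (2 * n) = 1 := by
    rw [hgt.mul_pow, pow_mul, sq, hg, one_pow, one_mul, ← pow_mul, mul_comm, pow_mul, hs, one_pow]
  have hw : u (∑ j, (m j : ℚ) • g (v j)) = -∑ j, (m j : ℚ) • g (v j) := by
    simp only [map_sum, map_smul, hug, ← sum_neg_distrib, ← smul_neg]
    exact sum_congr rfl fun j _ => by rw [← hgg (t (v j)), hv, map_neg]
  have hsum : ∀ i ∈ range (2 * n), q ^ i * φ ((g ^ i) ((s ^ (2 * n - i)) lam))
      = q ^ i * φ ((u ^ i) (q • u (g lam₁) - g lam₁ + ∑ j, (m j : ℚ) • g (v j))) := by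
    intro i hi
    rw [pow_sub_eq_pow_pred_pow hs (mem_range.mp hi).le, hgt.mul_pow, Module.End.mul_apply,
      hlam, hug]
  rw [sum_congr rfl hsum, sum_range_pow_mul_apply_pow_apply φ hu q _ hw]
  refine pow_sub_one_mul_add_geom_sum_neg_mul_nonpos n hq h1 ?_
  simpa only [map_sum, map_smul, smul_eq_mul] using h2

/-- Concluding inequality `K_α(λ) ≤ 0` in the proof of the paper's main theorem
(Theorem 4.10), abstracted: `g` an involution (`w_{0,I}`), `s^{2n} = id` (Frobenius),
`λ = q·s⁻¹(λ₁) − g(λ₁) + ∑ m_j·g(v_j)` with `g(s⁻¹(v_j)) = −v_j` (Hasse-type), and the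
two hypotheses `φ(g λ₁) ≤ 0` and `φ(g λ₁) ≤ ∑ m_j φ(g v_j)`. -/
theorem stmt8 (V : Type*) [AddCommGroup V] [Module ℚ V]
    (g s : Module.End ℚ V) (hcomm : g * s = s * g) (hg : g * g = 1)
    (n : ℕ) (hn : 1 ≤ n) (hs : s ^ (2 * n) = 1)
    (φ : V →ₗ[ℚ] ℚ) (q : ℚ) (hq : 1 ≤ q)
    (lam₁ : V) (N : ℕ) (v : Fin N → V)
    (hv : ∀ j, g ((s ^ (2 * n - 1)) (v j)) = -(v j))
    (m : Fin N → ℕ)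
    (lam : V)
    (hlam : lam = q • (s ^ (2 * n - 1)) lam₁ - g lam₁ + ∑ j, (m j : ℚ) • g (v j))
    (h1 : φ (g lam₁) ≤ 0)
    (h2 : φ (g lam₁) ≤ ∑ j, (m j : ℚ) * φ (g (v j))) :
    ∑ i ∈ Finset.range (2 * n), q ^ i * φ ((g ^ i) ((s ^ (2 * n - i)) lam)) ≤ 0 :=
  stmt8_general V g s hcomm hg n hs φ q hq lam₁ N v hv m lam hlam h1 h2
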